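/- For an AMP essential graph 𝒢*: if α→β−γ occurs as a (not necessarily induced) subgraph of the reduced graph of 𝒢* over strong-equivalence classes, then α and γ are adjacent in the reduced graph and the edge between them satisfies α⇒γ (i.e., it is α→γ or α−γ). -/

import Mathlib

/-- A mixed graph: directed edges (arrows) and undirected edges (lines),
no loops, at most one edge between any two vertices. -/
structure MixedGraph (V : Type) where
  arrow : V → V → Prop
  line : V → V → Prop
  line_symm : ∀ a b, line a b → line b a
  arrow_irrefl : ∀ a, ¬ arrow a a
  line_irrefl : ∀ a, ¬ line a a
  not_arrow_line : ∀ a b, arrow a b → ¬ line a b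
  not_arrow_arrow : ∀ a b, arrow a b → ¬ arrow b a

namespace MixedGraph

variable {V : Type}

/-- `a` and `b` are adjacent (joined by some edge). -/
def adj (G : MixedGraph V) (a b : V) : Prop := G.arrow a b ∨ G.arrow b a ∨ G.line a b

/-- A step of a semi-directed path: a forward arrow or a line. -/
def step (G : MixedGraph V) (a b : V) : Prop := G.arrow a b ∨ G.line a b

/-- A semi-directed cycle of length `k ≥ 3`: `v 0, …, v k` with `v k = v 0`,
each step an arrow or a line, at least one arrow, vertices distinct. -/
def IsSemiDirectedCycle (G : MixedGraph V) (k : ℕ) (v : ℕ → V) : Prop :=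
  3 ≤ k ∧ v k = v 0 ∧ (∀ i, i < k → G.step (v i) (v (i + 1))) ∧
    (∃ i, i < k ∧ G.arrow (v i) (v (i + 1))) ∧
    (∀ i j, i < j → j < k → v i ≠ v j)

/-- A chain graph is a mixed graph with no semi-directed cycle. -/
def IsChainGraph (G : MixedGraph V) : Prop := ∀ k v, ¬ G.IsSemiDirectedCycle k v

/-- A triplex `({a,c}, b)`: `a, c` nonadjacent and the induced subgraph on `{a,b,c}`
is `a→b←c`, `a→b−c`, or `a−b←c`. -/
def triplex (G : MixedGraph V) (a b c : V) : Prop :=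
  a ≠ c ∧ ¬ G.adj a c ∧
    ((G.arrow a b ∧ G.arrow c b) ∨ (G.arrow a b ∧ G.line b c) ∨ (G.line a b ∧ G.arrow c b))

def sameSkeleton (G H : MixedGraph V) : Prop := ∀ a b, G.adj a b ↔ H.adj a b

def sameTriplexes (G H : MixedGraph V) : Prop := ∀ a b c, G.triplex a b c ↔ H.triplex a b c

end MixedGraph

/-- The AMP Markov equivalence class of a chain graph `G0`: all chain graphs with the
same skeleton and the same triplexes as `G0`. -/
def AMPClass {V : Type} (G0 : MixedGraph V) : Set (MixedGraph V) :=
  {G | G.IsChainGraph ∧ G.sameSkeleton G0 ∧ G.sameTriplexes G0}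

/-- `E` is the AMP essential graph of the class of `G0`: same skeleton; `a→b` is an arrow
of `E` iff it occurs in some member and its reversal in none; all other edges are lines. -/
def IsEssentialGraph {V : Type} (G0 E : MixedGraph V) : Prop :=
  E.sameSkeleton G0 ∧
    (∀ a b, E.arrow a b ↔
      (∃ G ∈ AMPClass G0, G.arrow a b) ∧ ∀ G ∈ AMPClass G0, ¬ G.arrow b a) ∧
    (∀ a b, E.line a b ↔ G0.adj a b ∧ ¬ E.arrow a b ∧ ¬ E.arrow b a)

/-- A line of the essential graph is strong if it occurs as a line in every member. -/
def StrongLine {V : Type} (G0 E : MixedGraph V) (a b : V) : Prop :=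
  E.line a b ∧ ∀ G ∈ AMPClass G0, G.line a b

/-- A line of the essential graph is weak if both orientations occur among members. -/
def WeakLine {V : Type} (G0 E : MixedGraph V) (a b : V) : Prop :=
  E.line a b ∧ (∃ G ∈ AMPClass G0, G.arrow a b) ∧ (∃ G ∈ AMPClass G0, G.arrow b a)

/-- An arrow of the essential graph is strong if it occurs as an arrow in every member. -/
def StrongArrow {V : Type} (G0 E : MixedGraph V) (a b : V) : Prop :=
  E.arrow a b ∧ ∀ G ∈ AMPClass G0, G.arrow a b

/-- Two vertices are strongly equivalent if joined by a path of strong lines. -/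
def StronglyEquiv {V : Type} (G0 E : MixedGraph V) (x y : V) : Prop :=
  Relation.ReflTransGen (StrongLine G0 E) x y

/-- Arrow between strong-equivalence classes of the reduced graph: the class of `x`
points to the class of `y` iff some representatives are joined by an arrow of `E`. -/
def RArrow {V : Type} (G0 E : MixedGraph V) (x y : V) : Prop :=
  ∃ a b, StronglyEquiv G0 E x a ∧ StronglyEquiv G0 E y b ∧ E.arrow a b

/-- Line between distinct strong-equivalence classes of the reduced graph: some
representatives are joined by a (necessarily weak) line of `E`. -/
def RLine {V : Type} (G0 E : MixedGraph V) (x y : V) : Prop :=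
  ¬ StronglyEquiv G0 E x y ∧
    ∃ a b, StronglyEquiv G0 E x a ∧ StronglyEquiv G0 E y b ∧ E.line a b

/-- Adjacency of strong-equivalence classes in the reduced graph. -/
def RAdj {V : Type} (G0 E : MixedGraph V) (x y : V) : Prop :=
  RArrow G0 E x y ∨ RArrow G0 E y x ∨ RLine G0 E x y
/-!
A line of the essential graph that is not strong is weak: both of its orientations occur in
members of the class. Weakness of `b − c` spreads along a strong line `u − b`: a member with
`c → b − u` would, if `u` and `c` were nonadjacent, carry the triplex `({u, c}, b)`, which a
member with `b → c` cannot carry; once they are adjacent, the absence of semi-directed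
triangles orients `u − c` both ways in these two members. Hence for `a → b` in the essential
graph and a weak line `b − c`, the same two arguments make `a, c` adjacent and give a member
with `a → c`, so `c → a` is not an arrow of the essential graph.
-/

namespace MixedGraph

variable {V : Type} {G : MixedGraph V} {a b c : V}

lemma step.ne (h : G.step a b) : a ≠ b := by
  rintro rfl
  exact h.elim (G.arrow_irrefl a) (G.line_irrefl a)

lemma adj.symm (h : G.adj a b) : G.adj b a := by
  rcases h with h | h | h
  · exact Or.inr (Or.inl h)
  · exact Or.inl h
  · exact Or.inr (Or.inr (G.line_symm _ _ h))

lemma IsChainGraph.not_semiDirected_triangle (hG : G.IsChainGraph)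
    (hab : G.step a b) (hbc : G.step b c) (hca : G.step c a)
    (harr : G.arrow a b ∨ G.arrow b c ∨ G.arrow c a) : False := by
  have hab' := hab.ne
  have hbc' := hbc.ne
  have hca' := hca.ne
  apply hG 3 (fun i => if i = 0 then a else if i = 1 then b else if i = 2 then c else a)
  refine ⟨le_refl 3, rfl, ?_, ?_, ?_⟩
  · intro i hi
    interval_cases i <;> simpa
  · rcases harr with h | h | h
    · exact ⟨0, by norm_num, by simpa⟩
    · exact ⟨1, by norm_num, by simpa⟩
    · exact ⟨2, by norm_num, by simpa⟩
  · intro i j hij hj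
    interval_cases j <;> interval_cases i <;> simp_all [eq_comm]

lemma IsChainGraph.arrow_of_step_of_step (hG : G.IsChainGraph)
    (hab : G.step a b) (hbc : G.step b c) (harr : G.arrow a b ∨ G.arrow b c)
    (hac : G.adj a c) : G.arrow a c := by
  have harr' : G.arrow a b ∨ G.arrow b c ∨ G.arrow c a := harr.elim Or.inl (Or.inr ∘ Or.inl)
  rcases hac with h | h | h
  · exact h
  · exact (hG.not_semiDirected_triangle hab hbc (Or.inl h) harr').elim
  · exact (hG.not_semiDirected_triangle hab hbc (Or.inr (G.line_symm _ _ h)) harr').elim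

lemma triplex_of_step_of_arrow (hab : G.step a b) (hcb : G.arrow c b) (hac : a ≠ c)
    (hn : ¬ G.adj a c) : G.triplex a b c := by
  refine ⟨hac, hn, ?_⟩
  rcases hab with h | h
  · exact Or.inl ⟨h, hcb⟩
  · exact Or.inr (Or.inr ⟨h, hcb⟩)

lemma triplex.not_arrow (h : G.triplex a b c) : ¬ G.arrow b c := by
  intro hbc
  rcases h.2.2 with ⟨_, h⟩ | ⟨_, h⟩ | ⟨_, h⟩
  · exact G.not_arrow_arrow _ _ hbc h
  · exact G.not_arrow_line _ _ hbc h
  · exact G.not_arrow_arrow _ _ hbc h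

end MixedGraph

section EssentialGraph

variable {V : Type} {G0 E G G' : MixedGraph V} {a b b' c u : V}

lemma StrongLine.symm (h : StrongLine G0 E a b) : StrongLine G0 E b a :=
  ⟨E.line_symm _ _ h.1, fun G hG => G.line_symm _ _ (h.2 G hG)⟩

lemma StrongLine.step (h : StrongLine G0 E a b) : ∀ G ∈ AMPClass G0, G.step a b :=
  fun G hG => Or.inr (h.2 G hG)

lemma StronglyEquiv.symm (h : StronglyEquiv G0 E a b) : StronglyEquiv G0 E b a := by
  induction h with
  | refl => exact .refl
  | tail _ hstep ih => exact ih.head hstep.symm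

lemma MixedGraph.triplex.of_mem_AMPClass (hG : G ∈ AMPClass G0) (hG' : G' ∈ AMPClass G0)
    (h : G.triplex a b c) : G'.triplex a b c :=
  (hG'.2.2 a b c).2 ((hG.2.2 a b c).1 h)

lemma adj_of_forall_step_of_weakLine (hab : ∀ G ∈ AMPClass G0, G.step a b)
    (hbc : WeakLine G0 E b c) (hac : a ≠ c) : G0.adj a c := by
  obtain ⟨-, ⟨G1, hG1, hbc1⟩, ⟨G2, hG2, hcb2⟩⟩ := hbc
  by_contra hn
  have ht : G2.triplex a b c :=
    MixedGraph.triplex_of_step_of_arrow (hab G2 hG2) hcb2 hac fun h => hn ((hG2.2.1 a c).1 h)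
  exact (ht.of_mem_AMPClass hG2 hG1).not_arrow hbc1

lemma exists_arrow_of_forall_step_of_weakLine (hab : ∀ G ∈ AMPClass G0, G.step a b)
    (hbc : WeakLine G0 E b c) (hac : a ≠ c) : ∃ G ∈ AMPClass G0, G.arrow a c := by
  obtain ⟨G1, hG1, hbc1⟩ := hbc.2.1
  have hadj : G1.adj a c := (hG1.2.1 a c).2 (adj_of_forall_step_of_weakLine hab hbc hac)
  exact ⟨G1, hG1, hG1.1.arrow_of_step_of_step (hab G1 hG1) (Or.inl hbc1) (Or.inr hbc1) hadj⟩

namespace IsEssentialGraph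

variable (hE : IsEssentialGraph G0 E)
include hE

lemma step_of_arrow (hab : E.arrow a b) : ∀ G ∈ AMPClass G0, G.step a b := by
  intro G hG
  rcases (hG.2.1 a b).2 ((hE.1 a b).1 (Or.inl hab)) with h | h | h
  · exact Or.inl h
  · exact (((hE.2.1 a b).1 hab).2 G hG h).elim
  · exact Or.inr h

lemma weakLine_of_exists_arrow (hab : ∃ G ∈ AMPClass G0, G.arrow a b)
    (hba : ∃ G ∈ AMPClass G0, G.arrow b a) : WeakLine G0 E a b := by
  obtain ⟨G, hG, h⟩ := hab
  obtain ⟨G', hG', h'⟩ := hba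
  have hl : E.line a b := (hE.2.2 a b).2 ⟨(hG.2.1 a b).1 (Or.inl h),
    fun hE' => ((hE.2.1 a b).1 hE').2 G' hG' h', fun hE' => ((hE.2.1 b a).1 hE').2 G hG h⟩
  exact ⟨hl, ⟨G, hG, h⟩, ⟨G', hG', h'⟩⟩

lemma strongLine_of_forall_not_arrow (hl : E.line a b)
    (hn : ∀ G ∈ AMPClass G0, ¬ G.arrow a b) : StrongLine G0 E a b := by
  refine ⟨hl, fun G hG => ?_⟩
  rcases (hG.2.1 a b).2 ((hE.2.2 a b).1 hl).1 with h | h | h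
  · exact (hn G hG h).elim
  · exact (((hE.2.2 a b).1 hl).2.2 ((hE.2.1 b a).2 ⟨⟨G, hG, h⟩, hn⟩)).elim
  · exact h

lemma weakLine_of_line (hl : E.line a b) (hn : ¬ StronglyEquiv G0 E a b) :
    WeakLine G0 E a b := by
  refine ⟨hl, ?_, ?_⟩ <;> by_contra h <;> push Not at h
  · exact hn (.single (hE.strongLine_of_forall_not_arrow hl h))
  · exact hn (.single (hE.strongLine_of_forall_not_arrow (E.line_symm _ _ hl) h).symm)

lemma weakLine_of_strongLine (hub : StrongLine G0 E u b) (hbc : WeakLine G0 E b c) :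
    WeakLine G0 E u c := by
  obtain ⟨G1, hG1, hbc1⟩ := hbc.2.1
  obtain ⟨G2, hG2, hcb2⟩ := hbc.2.2
  have huc : u ≠ c := by
    rintro rfl
    exact G1.not_arrow_line _ _ hbc1 (G1.line_symm _ _ (hub.2 G1 hG1))
  have hadj : G0.adj u c := adj_of_forall_step_of_weakLine hub.step hbc huc
  refine hE.weakLine_of_exists_arrow
    (exists_arrow_of_forall_step_of_weakLine hub.step hbc huc) ⟨G2, hG2, ?_⟩
  exact hG2.1.arrow_of_step_of_step (Or.inl hcb2) (hub.symm.step G2 hG2) (Or.inl hcb2)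
    ((hG2.2.1 u c).2 hadj).symm

lemma weakLine_of_stronglyEquiv (hbb' : StronglyEquiv G0 E b b') (hb'c : WeakLine G0 E b' c) :
    WeakLine G0 E b c := by
  induction hbb' using Relation.ReflTransGen.head_induction_on with
  | refl => exact hb'c
  | head hstep _ ih => exact hE.weakLine_of_strongLine hstep ih

lemma arrow_or_line_of_arrow_of_weakLine (hab : E.arrow a b) (hbc : WeakLine G0 E b c)
    (hac : a ≠ c) : E.arrow a c ∨ E.line a c := by
  obtain ⟨G, hG, hac'⟩ := exists_arrow_of_forall_step_of_weakLine (hE.step_of_arrow hab) hbc hac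
  rcases (hE.1 a c).2 ((hG.2.1 a c).1 (Or.inl hac')) with h | h | h
  · exact Or.inl h
  · exact (((hE.2.1 c a).1 h).2 G hG hac').elim
  · exact Or.inr h

end IsEssentialGraph

end EssentialGraph

theorem stmt12_general {V : Type} (G0 E : MixedGraph V)
    (hE : IsEssentialGraph G0 E) (x y z : V)
    (hxz : ¬ StronglyEquiv G0 E x z)
    (ha : RArrow G0 E x y) (hl : RLine G0 E y z) :
    RArrow G0 E x z ∨ RLine G0 E x z := by
  obtain ⟨a, b, hxa, hyb, hab⟩ := ha
  obtain ⟨hyz, b', c, hyb', hzc, hb'c⟩ := hl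
  have hweak : WeakLine G0 E b c :=
    hE.weakLine_of_stronglyEquiv (hyb.symm.trans hyb')
      (hE.weakLine_of_line hb'c fun h => hyz (hyb'.trans (h.trans hzc.symm)))
  have hac : a ≠ c := by
    rintro rfl
    exact hxz (hxa.trans hzc.symm)
  rcases hE.arrow_or_line_of_arrow_of_weakLine hab hweak hac with h | h
  · exact Or.inl ⟨a, c, hxa, hzc, h⟩
  · exact Or.inr ⟨hxz, a, c, hxa, hzc, h⟩

/-- Lemma 3.9(b): if `α→β−γ` occurs as a subgraph of the reduced graph of the essential
graph over strong-equivalence classes, then `α ⇒ γ`: the classes `α` and `γ` are joined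
by an arrow `α→γ` or a line `α−γ` in the reduced graph. -/
theorem stmt12 {V : Type} (G0 E : MixedGraph V) (h0 : G0.IsChainGraph)
    (hE : IsEssentialGraph G0 E) (x y z : V)
    (hxy : ¬ StronglyEquiv G0 E x y) (hyz : ¬ StronglyEquiv G0 E y z)
    (hxz : ¬ StronglyEquiv G0 E x z)
    (ha : RArrow G0 E x y) (hl : RLine G0 E y z) :
    RArrow G0 E x z ∨ RLine G0 E x z :=
  stmt12_general G0 E hE x y z hxz ha hl
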